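/- Let U ⊆ ℂ be open and connected. Let f, N : U → ℍ be smooth with Re f = 0, Re N = 0, N² = −1, satisfying f_y = N·f_x = −f_x·N and ½(N_x − N·N_y) = −f_x, ½(N_y + N·N_x) = −f_y on U (f has constant mean curvature H = 1 with Gauss map N). Let φ : ℝ × U → ℍ be smooth such that for every t ∈ ℝ, with T_t := ½(N·(cos t − 1) + sin t), the map φ(t, ·) satisfies ∂xφ(t,·) = ½(N_x − N·N_y)·T_t·φ(t,·) and ∂yφ(t,·) = ½(N_y + N·N_x)·T_t·φ(t,·) on U, and suppose φ(0, z₀) = v ≠ 0 for some z₀ ∈ U. Then φ(0, ·) is constant equal to v on U, and the map z ↦ f(z) + 2·(∂φ/∂t)(0, z)·v⁻¹ is constant on U. (Chart version of the Sym–Bobenko formula, Theorem 4.1: f = −2(∂/∂t φ_{e^{it}})|_{t=0}·φ_{λ=1}⁻¹ up to translation.) -/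

import Mathlib

/- Chart version of the Sym–Bobenko formula, Theorem 4.1: for a constant mean
curvature surface f with Gauss map N and a smooth S¹-family of d_λ-parallel
sections φ(t,·) (λ = e^{it}), the section φ(0,·) is constant and
f = −2(∂/∂t φ)|_{t=0}·φ_{λ=1}⁻¹ up to translation, i.e.
z ↦ f(z) + 2·(∂φ/∂t)(0,z)·v⁻¹ is constant. -/

noncomputable section
open Complex

local notation "ℍ" => Quaternion ℝ

/-- Partial derivative in the direction 1 (the x-direction). -/
def dx (f : ℂ → ℍ) (z : ℂ) : ℍ := fderiv ℝ f z 1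

/-- Partial derivative in the direction i (the y-direction). -/
def dy (f : ℂ → ℍ) (z : ℂ) : ℍ := fderiv ℝ f z Complex.I

/-- T_t = ½(N·(cos t − 1) + sin t). -/
def Tt (N : ℂ → ℍ) (t : ℝ) (z : ℂ) : ℍ :=
  (N z * ((Real.cos t - 1 : ℝ) : ℍ) + ((Real.sin t : ℝ) : ℍ)) / 2

/- At t = 0 the factor T_t vanishes, so φ(0, ·) has zero derivative and is constant on the
connected set U. Differentiating the parallel equations in t at t = 0, where T_0 = 0 and
∂ₜT_0 = ½, and exchanging ∂ₜ with ∂_x, ∂_y (symmetry of second derivatives), gives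
d(∂ₜφ(0, ·)) = ½ (dN)'·v = −½ df·v by the constant mean curvature equations; hence
f + 2 ∂ₜφ(0, ·) v⁻¹ has zero derivative and is constant as well. -/

theorem Complex.continuousLinearMap_ext {F : Type*} [AddCommGroup F] [Module ℝ F]
    [TopologicalSpace F] {L M : ℂ →L[ℝ] F} (h1 : L 1 = M 1) (hI : L I = M I) : L = M :=
  ContinuousLinearMap.coe_injective <| basisOneI.ext fun i => by fin_cases i <;> simpa

theorem IsOpen.is_const_of_hasFDerivAt_zero {E F : Type*} [NormedAddCommGroup E]
    [NormedSpace ℝ E] [NormedAddCommGroup F] [NormedSpace ℝ F] {s : Set E} {f : E → F}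
    (hs : IsOpen s) (hs' : IsPreconnected s) (hf : ∀ x ∈ s, HasFDerivAt f (0 : E →L[ℝ] F) x)
    {x y : E} (hx : x ∈ s) (hy : y ∈ s) : f x = f y :=
  hs.is_const_of_fderiv_eq_zero (𝕜 := ℝ) hs'
    (fun x hx => (hf x hx).differentiableAt.differentiableWithinAt)
    (fun x hx => (hf x hx).fderiv) hx hy

section MixedPartials

variable {E F : Type*} [NormedAddCommGroup E] [NormedSpace ℝ E] [NormedAddCommGroup F]
  [NormedSpace ℝ F] {φ : ℝ × E → F} {a : ℝ} {b : E}

theorem HasFDerivAt.hasDerivAt_comp_prodMk_left {φ' : ℝ × E →L[ℝ] F}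
    (h : HasFDerivAt φ φ' (a, b)) : HasDerivAt (fun t => φ (t, b)) (φ' (1, 0)) a :=
  h.comp_hasDerivAt (f := fun t => (t, b)) a ((hasDerivAt_id a).prodMk (hasDerivAt_const a b))

/-- Mixed partials of a `C²` function commute: `∂_w ∂_t φ = ∂_t ∂_w φ`. -/
theorem ContDiffAt.exists_hasFDerivAt_deriv_fst (hφ : ContDiffAt ℝ 2 φ (a, b)) :
    ∃ L : E →L[ℝ] F, HasFDerivAt (fun w => deriv (fun t => φ (t, w)) a) L b ∧
      ∀ u, HasDerivAt (fun t => fderiv ℝ (fun w => φ (t, w)) b u) (L u) a := by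
  set H := fderiv ℝ (fderiv ℝ φ) (a, b)
  have hD : HasFDerivAt (fderiv ℝ φ) H (a, b) :=
    ((hφ.fderiv_right (m := 1) le_rfl).differentiableAt one_ne_zero).hasFDerivAt
  have hdiff : ∀ᶠ p in nhds (a, b), HasFDerivAt φ (fderiv ℝ φ p) p :=
    (hφ.eventually (by simp)).mono fun p hp => (hp.differentiableAt two_ne_zero).hasFDerivAt
  refine ⟨(ContinuousLinearMap.apply ℝ F ((1 : ℝ), (0 : E))).comp
    (H.comp (ContinuousLinearMap.inr ℝ ℝ E)), ?_, fun u => ?_⟩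
  · refine ((ContinuousLinearMap.apply ℝ F ((1 : ℝ), (0 : E))).hasFDerivAt.comp b
      (hD.comp b (hasFDerivAt_prodMk_right a b))).congr_of_eventuallyEq ?_
    filter_upwards [(Continuous.prodMk_right a).continuousAt.eventually hdiff] with w hw
    exact hw.hasDerivAt_comp_prodMk_left.deriv
  · simp only [ContinuousLinearMap.coe_comp, Function.comp_apply, ContinuousLinearMap.inr_apply,
      ContinuousLinearMap.apply_apply]
    rw [← hφ.isSymmSndFDerivAt (by simp)]
    refine ((ContinuousLinearMap.apply ℝ F ((0 : ℝ), u)).hasFDerivAt.comp_hasDerivAt a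
      hD.hasDerivAt_comp_prodMk_left).congr_of_eventuallyEq ?_
    filter_upwards [(Continuous.prodMk_left b).continuousAt.eventually hdiff] with t ht
    exact congrArg (· u) (ht.comp b (hasFDerivAt_prodMk_right t b)).fderiv

end MixedPartials

theorem add_two_mul_neg_mul_inv_two_mul_mul_inv {α : Type*} [DivisionRing α] [CharZero α]
    (x : α) {v : α} (hv : v ≠ 0) : x + 2 * (-x * 2⁻¹ * v) * v⁻¹ = 0 := by
  rw [mul_assoc, mul_assoc, mul_inv_cancel₀ hv, mul_one, ← mul_assoc, mul_neg, neg_mul,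
    (Commute.ofNat_left 2 x).eq, mul_assoc, mul_inv_cancel₀ two_ne_zero, mul_one,
    add_neg_cancel]

instance Quaternion.instCharZeroReal : CharZero ℍ :=
  charZero_of_injective_algebraMap (algebraMap ℝ ℍ).injective

theorem HasDerivAt.quaternion_coe {f : ℝ → ℝ} {f' t : ℝ} (hf : HasDerivAt f f' t) :
    HasDerivAt (fun s => (f s : ℍ)) (f' : ℍ) t := by
  simpa [← Quaternion.coe_mul_eq_smul] using hf.smul_const (1 : ℍ)

theorem Tt_zero (N : ℂ → ℍ) (z : ℂ) : Tt N 0 z = 0 := by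
  simp [Tt]

theorem hasDerivAt_Tt (N : ℂ → ℍ) (t : ℝ) (z : ℂ) :
    HasDerivAt (fun s => Tt N s z)
      ((N z * ((-Real.sin t : ℝ) : ℍ) + ((Real.cos t : ℝ) : ℍ)) / 2) t := by
  simpa [Tt, div_eq_mul_inv] using
    ((((Real.hasDerivAt_cos t).sub_const 1).quaternion_coe.const_mul (N z)).add
      (Real.hasDerivAt_sin t).quaternion_coe).mul_const (2⁻¹ : ℍ)

theorem hasDerivAt_mul_Tt_mul (A : ℍ) (N : ℂ → ℍ) (z : ℂ) {p : ℝ → ℍ}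
    (hp : DifferentiableAt ℝ p 0) :
    HasDerivAt (fun t => A * Tt N t z * p t) (A * 2⁻¹ * p 0) 0 := by
  simpa [Tt_zero] using ((hasDerivAt_Tt N 0 z).const_mul A).fun_mul hp.hasDerivAt

theorem stmt_19_general (U : Set ℂ) (hU : IsOpen U) (hconn : IsConnected U)
    (f N : ℂ → ℍ)
    (hfsmooth : ContDiffOn ℝ (⊤ : ℕ∞) f U)
    (hcmc1 : ∀ z ∈ U, (dx N z - N z * dy N z) / 2 = -dx f z)
    (hcmc2 : ∀ z ∈ U, (dy N z + N z * dx N z) / 2 = -dy f z)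
    (φ : ℝ × ℂ → ℍ)
    (hφsmooth : ContDiffOn ℝ (⊤ : ℕ∞) φ ((Set.univ : Set ℝ) ×ˢ U))
    (hparx : ∀ t : ℝ, ∀ z ∈ U,
      fderiv ℝ (fun w => φ (t, w)) z 1
        = ((dx N z - N z * dy N z) / 2) * Tt N t z * φ (t, z))
    (hpary : ∀ t : ℝ, ∀ z ∈ U,
      fderiv ℝ (fun w => φ (t, w)) z Complex.I
        = ((dy N z + N z * dx N z) / 2) * Tt N t z * φ (t, z))
    (z₀ : ℂ) (hz₀ : z₀ ∈ U) (v : ℍ) (hv : v ≠ 0) (hφv : φ (0, z₀) = v) :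
    (∀ z ∈ U, φ (0, z) = v)
    ∧ (∀ z ∈ U, ∀ w ∈ U,
        f z + 2 * deriv (fun t => φ (t, z)) 0 * v⁻¹
          = f w + 2 * deriv (fun t => φ (t, w)) 0 * v⁻¹) := by
  have hφ : ∀ t, ∀ z ∈ U, ContDiffAt ℝ 2 φ (t, z) := fun t z hz =>
    (hφsmooth.contDiffAt ((isOpen_univ.prod hU).mem_nhds ⟨trivial, hz⟩)).of_le
      (WithTop.coe_le_coe.2 le_top)
  have hφ0 : ∀ z ∈ U, φ (0, z) = v := by
    refine fun z hz => (hU.is_const_of_hasFDerivAt_zero (f := fun w => φ (0, w))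
      hconn.isPreconnected (fun w hw => ?_) hz hz₀).trans hφv
    have hslice : DifferentiableAt ℝ (fun w => φ (0, w)) w :=
      ((hφ 0 w hw).differentiableAt two_ne_zero).comp w
        (hasFDerivAt_prodMk_right (0 : ℝ) w).differentiableAt
    refine hslice.hasFDerivAt.congr_fderiv (Complex.continuousLinearMap_ext ?_ ?_) <;>
      simp [hparx, hpary, hw, Tt_zero]
  refine ⟨hφ0, fun z hz w hw =>
    hU.is_const_of_hasFDerivAt_zero (f := fun w => f w + 2 * deriv (fun t => φ (t, w)) 0 * v⁻¹)
      hconn.isPreconnected (fun z hz => ?_) hz hw⟩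
  obtain ⟨L, hL, hLt⟩ := (hφ 0 z hz).exists_hasFDerivAt_deriv_fst
  have hLe : ∀ e A, (∀ t, fderiv ℝ (fun w => φ (t, w)) z e = A * Tt N t z * φ (t, z)) →
      L e = A * 2⁻¹ * v := fun e A h => by
    refine (hLt e).unique ?_
    simpa [funext h, hφ0 z hz] using hasDerivAt_mul_Tt_mul A N z
      (((hφ 0 z hz).differentiableAt two_ne_zero).comp 0
        (hasFDerivAt_prodMk_left (0 : ℝ) z).differentiableAt)
  have hLx : L 1 = -dx f z * 2⁻¹ * v := by rw [hLe 1 _ fun t => hparx t z hz, hcmc1 z hz]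
  have hLy : L I = -dy f z * 2⁻¹ * v := by rw [hLe I _ fun t => hpary t z hz, hcmc2 z hz]
  have hf := ((hfsmooth.contDiffAt (hU.mem_nhds hz)).differentiableAt (by simp)).hasFDerivAt
  refine (hf.add ((hL.const_mul 2).mul_const' v⁻¹)).congr_fderiv
    (Complex.continuousLinearMap_ext ?_ ?_)
  · simpa [hLx, dx] using add_two_mul_neg_mul_inv_two_mul_mul_inv (dx f z) hv
  · simpa [hLy, dy] using add_two_mul_neg_mul_inv_two_mul_mul_inv (dy f z) hv

theorem stmt_19 (U : Set ℂ) (hU : IsOpen U) (hconn : IsConnected U)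
    (f N : ℂ → ℍ)
    (hfsmooth : ContDiffOn ℝ (⊤ : ℕ∞) f U)
    (hNsmooth : ContDiffOn ℝ (⊤ : ℕ∞) N U)
    (hfre : ∀ z ∈ U, (f z).re = 0)
    (hre : ∀ z ∈ U, (N z).re = 0)
    (hsq : ∀ z ∈ U, N z * N z = -1)
    (hconf1 : ∀ z ∈ U, dy f z = N z * dx f z)
    (hconf2 : ∀ z ∈ U, N z * dx f z = -(dx f z * N z))
    (hcmc1 : ∀ z ∈ U, (dx N z - N z * dy N z) / 2 = -dx f z)
    (hcmc2 : ∀ z ∈ U, (dy N z + N z * dx N z) / 2 = -dy f z)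
    (φ : ℝ × ℂ → ℍ)
    (hφsmooth : ContDiffOn ℝ (⊤ : ℕ∞) φ ((Set.univ : Set ℝ) ×ˢ U))
    (hparx : ∀ t : ℝ, ∀ z ∈ U,
      fderiv ℝ (fun w => φ (t, w)) z 1
        = ((dx N z - N z * dy N z) / 2) * Tt N t z * φ (t, z))
    (hpary : ∀ t : ℝ, ∀ z ∈ U,
      fderiv ℝ (fun w => φ (t, w)) z Complex.I
        = ((dy N z + N z * dx N z) / 2) * Tt N t z * φ (t, z))
    (z₀ : ℂ) (hz₀ : z₀ ∈ U) (v : ℍ) (hv : v ≠ 0) (hφv : φ (0, z₀) = v) :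
    (∀ z ∈ U, φ (0, z) = v)
    ∧ (∀ z ∈ U, ∀ w ∈ U,
        f z + 2 * deriv (fun t => φ (t, z)) 0 * v⁻¹
          = f w + 2 * deriv (fun t => φ (t, w)) 0 * v⁻¹) :=
  stmt_19_general U hU hconn f N hfsmooth hcmc1 hcmc2 φ hφsmooth hparx hpary z₀ hz₀ v hv hφv
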